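/- For every natural number N ≥ 1 and every n ≥ 1, the response performance of the circular buffer BUFF satisfies rp_BUFF(n) = 4n; in particular the supremum defining rp_BUFF(n) is attained and finite. -/

import Mathlib

/-- Labels of steps in the BUFF transition system. -/
inductive BLabel : Type
  | tick | ins | write | read | outs
deriving DecidableEq

/-- States of the BUFF transition system: `(x, y, m, u)` where `x, y ∈ {0,1}` are the
input/output flags of the buffer controller (encoded as `Bool`), `m ∈ {0, …, N}` is the
number of values in the storage, and `u` is an urgency flag (`true` = urgent). -/
abbrev BState : Type := Bool × Bool × ℕ × Bool

/-- Steps of the BUFF transition system (storage of `N` circularly used cells). -/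
inductive BStep (N : ℕ) : BState → BLabel → BState → Prop
  | tick (x y : Bool) (m : ℕ) : BStep N (x, y, m, false) BLabel.tick (x, y, m, true)
  | ins (y : Bool) (m : ℕ) (u : Bool) :
      BStep N (false, y, m, u) BLabel.ins (true, y, m, false)
  | write (y : Bool) (m : ℕ) (u : Bool) (h : m < N) :
      BStep N (true, y, m, u) BLabel.write (false, y, m + 1, false)
  | read (x : Bool) (m : ℕ) (u : Bool) (h : 0 < m) :
      BStep N (x, false, m, u) BLabel.read (x, true, m - 1, false)
  | outs (x : Bool) (m : ℕ) (u : Bool) :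
      BStep N (x, true, m, u) BLabel.outs (x, false, m, false)

/-- `BPath N s ls` : `ls` is the sequence of labels of a finite path of consecutive
steps starting in state `s`. -/
inductive BPath (N : ℕ) : BState → List BLabel → Prop
  | nil (s : BState) : BPath N s []
  | cons {s s' : BState} {l : BLabel} {ls : List BLabel} :
      BStep N s l s' → BPath N s' ls → BPath N s (l :: ls)

/-- A path of the BUFF system: a path starting in the initial state `(0, 0, 0, relaxed)`. -/
def BuffPath (N : ℕ) (ls : List BLabel) : Prop := BPath N (false, false, 0, false) ls

/-- An `n`-admissible path of the BUFF system: at most `n` `in`-steps and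
at most `n - 1` `out`-steps. -/
def BuffAdmissible (N n : ℕ) (ls : List BLabel) : Prop :=
  BuffPath N ls ∧ ls.count BLabel.ins ≤ n ∧ ls.count BLabel.outs ≤ n - 1

/-- The response performance of the BUFF buffer: the supremum (in `ℕ∞`) of the
number of ticks over all `n`-admissible paths. -/
noncomputable def rpBuff (N n : ℕ) : ℕ∞ :=
  sSup {k : ℕ∞ | ∃ ls : List BLabel, BuffAdmissible N n ls ∧ (ls.count BLabel.tick : ℕ∞) = k}


/-! Every tick must be followed by an action before the next one, so a path from the relaxed
initial state has at most one more tick than actions. Since `x` and `y` start at `0`, writes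
are bounded by in-steps and reads by out-steps plus one, giving at most
`2 · #in + 2 · #out + 2 ≤ 4n` ticks. Conversely, `n` rounds `tick in tick write tick read tick`
separated by `n - 1` out-steps attain `4n`. -/

namespace BPath

variable {N : ℕ} {s : BState} {ls : List BLabel}

theorem count_tick_le (h : BPath N s ls) :
    ls.count BLabel.tick ≤ ls.count BLabel.ins + ls.count BLabel.write +
      ls.count BLabel.read + ls.count BLabel.outs + (!s.2.2.2).toNat := by
  induction h with
  | nil => simp
  | cons step _ ih => cases step <;> simp at ih ⊢ <;> omega

theorem count_write_le (h : BPath N s ls) :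
    ls.count BLabel.write ≤ ls.count BLabel.ins + s.1.toNat := by
  induction h with
  | nil => simp
  | cons step _ ih => cases step <;> simp at ih ⊢ <;> omega

theorem count_read_le (h : BPath N s ls) :
    ls.count BLabel.read ≤ ls.count BLabel.outs + (!s.2.1).toNat := by
  induction h with
  | nil => simp
  | cons step _ ih => cases step <;> simp at ih ⊢ <;> omega

end BPath

theorem BuffAdmissible.count_tick_le {N n : ℕ} {ls : List BLabel} (hn : 1 ≤ n)
    (h : BuffAdmissible N n ls) : ls.count BLabel.tick ≤ 4 * n := by
  obtain ⟨hpath, hins, houts⟩ := h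
  have hticks := hpath.count_tick_le
  have hwrites := hpath.count_write_le
  have hreads := hpath.count_read_le
  simp only [Bool.not_false, Bool.toNat_true, Bool.toNat_false] at hticks hwrites hreads
  omega

open BLabel in
def buffRound : List BLabel := [tick, ins, tick, write, tick, read, tick]

theorem BPath.buffRound_append {N : ℕ} (hN : 1 ≤ N) {ls : List BLabel}
    (h : BPath N (false, true, 0, true) ls) : BPath N (false, false, 0, false) (buffRound ++ ls) :=
  .cons (.tick _ _ _) <| .cons (.ins _ _ _) <| .cons (.tick _ _ _) <| .cons (.write _ _ _ hN) <|
    .cons (.tick _ _ _) <| .cons (.read _ _ _ one_pos) <| .cons (.tick _ _ _) h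

def buffWitness : ℕ → List BLabel
  | 0 => buffRound
  | k + 1 => buffRound ++ BLabel.outs :: buffWitness k

theorem buffPath_buffWitness {N : ℕ} (hN : 1 ≤ N) (k : ℕ) : BuffPath N (buffWitness k) := by
  induction k with
  | zero => exact BPath.buffRound_append hN (.nil _)
  | succ k ih => exact BPath.buffRound_append hN (.cons (.outs _ _ _) ih)

theorem count_buffWitness (k : ℕ) :
    (buffWitness k).count BLabel.tick = 4 * (k + 1) ∧
      (buffWitness k).count BLabel.ins = k + 1 ∧ (buffWitness k).count BLabel.outs = k := by
  induction k with
  | zero => simp [buffWitness, buffRound]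
  | succ k ih => simp [buffWitness, buffRound, ih]; omega

/-- For every `N ≥ 1` and `n ≥ 1`, the response performance of the circular buffer
BUFF satisfies `rp_BUFF(n) = 4n`; in particular the supremum defining `rp_BUFF(n)` is
attained (by an admissible path with exactly `4n` ticks) and finite. -/
theorem buff_response_performance (N n : ℕ) (hN : 1 ≤ N) (hn : 1 ≤ n) :
    rpBuff N n = (4 * n : ℕ) ∧
    ∃ ls : List BLabel, BuffAdmissible N n ls ∧ ls.count BLabel.tick = 4 * n := by
  obtain ⟨hticks, hins, houts⟩ := count_buffWitness (n - 1)
  have hwitness : BuffAdmissible N n (buffWitness (n - 1)) :=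
    ⟨buffPath_buffWitness hN _, by omega, by omega⟩
  have hwitness_ticks : (buffWitness (n - 1)).count BLabel.tick = 4 * n := by omega
  have hgreatest : IsGreatest {k : ℕ∞ | ∃ ls : List BLabel, BuffAdmissible N n ls ∧
      (ls.count BLabel.tick : ℕ∞) = k} ((4 * n : ℕ) : ℕ∞) := by
    refine ⟨⟨_, hwitness, by rw [hwitness_ticks]⟩, ?_⟩
    rintro _ ⟨ls, hls, rfl⟩
    exact_mod_cast hls.count_tick_le hn
  exact ⟨IsGreatest.csSup_eq hgreatest, _, hwitness, hwitness_ticks⟩
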